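/- Let R be a ring, let Q be a left rooted quiver, and let X be a representation of Q in the category of right R-modules such that X(v) is a flat module for every vertex v. Then the flat dimension of X is at most 1: there exists a short exact sequence 0 → F₁ → F₀ → X → 0 of representations in which F₀ and F₁ are flat representations. -/

import Mathlib

open CategoryTheory Limits

universe w w' v u

namespace RepModels

variable {C : Type u} [Category.{v} C] [Abelian C]

/-- `Ext¹(A, B) = 0`. -/
def ext1Vanishes [HasExt.{w} C] (A B : C) : Prop :=
  Subsingleton (Abelian.Ext A B 1)

/-- `Extⁱ(A, B) = 0` for all `i ≥ 1`. -/
def extVanishes [HasExt.{w} C] (A B : C) : Prop :=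
  ∀ i : ℕ, 1 ≤ i → Subsingleton (Abelian.Ext A B i)

/-- `(𝒜, ℬ)` is a cotorsion pair: each class is the `Ext¹`-orthogonal of the other. -/
def IsCotorsionPair [HasExt.{w} C] (𝒜 ℬ : Set C) : Prop :=
  (∀ X : C, X ∈ 𝒜 ↔ ∀ Y ∈ ℬ, ext1Vanishes.{w} X Y) ∧
  (∀ Y : C, Y ∈ ℬ ↔ ∀ X ∈ 𝒜, ext1Vanishes.{w} X Y)

/-- `(𝒜, ℬ)` is a complete cotorsion pair: it is a cotorsion pair and every object `M`
fits in short exact sequences `0 → B → A → M → 0` and `0 → M → B' → A' → 0`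
with `A, A' ∈ 𝒜` and `B, B' ∈ ℬ`. -/
def IsCompleteCotorsionPair [HasExt.{w} C] (𝒜 ℬ : Set C) : Prop :=
  IsCotorsionPair.{w} 𝒜 ℬ ∧
  (∀ M : C, ∃ (A B : C) (_ : A ∈ 𝒜) (_ : B ∈ ℬ) (f : B ⟶ A) (g : A ⟶ M) (w : f ≫ g = 0),
    (ShortComplex.mk f g w).ShortExact) ∧
  (∀ M : C, ∃ (A B : C) (_ : A ∈ 𝒜) (_ : B ∈ ℬ) (f : M ⟶ B) (g : B ⟶ A) (w : f ≫ g = 0),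
    (ShortComplex.mk f g w).ShortExact)

/-- A pair of classes `(𝒜, ℬ)` is hereditary if `Extⁱ(A, B) = 0` for all `i ≥ 1`,
`A ∈ 𝒜`, `B ∈ ℬ`. -/
def IsHereditaryPair [HasExt.{w} C] (𝒜 ℬ : Set C) : Prop :=
  ∀ A ∈ 𝒜, ∀ B ∈ ℬ, extVanishes.{w} A B

/-- A class `𝒲` of objects is thick: it is closed under direct summands (retracts) and
whenever two of the three terms of a short exact sequence lie in `𝒲`, so does the third. -/
def IsThickClass (𝒲 : Set C) : Prop :=
  (∀ X Y : C, Y ∈ 𝒲 → (∃ (i : X ⟶ Y) (r : Y ⟶ X), i ≫ r = 𝟙 X) → X ∈ 𝒲) ∧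
  (∀ (S : ShortComplex C), S.ShortExact →
    ((S.X₁ ∈ 𝒲 → S.X₂ ∈ 𝒲 → S.X₃ ∈ 𝒲) ∧
     (S.X₁ ∈ 𝒲 → S.X₃ ∈ 𝒲 → S.X₂ ∈ 𝒲) ∧
     (S.X₂ ∈ 𝒲 → S.X₃ ∈ 𝒲 → S.X₁ ∈ 𝒲)))

/-- `(𝒞, 𝒲, ℱ)` is a Hovey triple: `𝒲` is thick and `(𝒞 ∩ 𝒲, ℱ)` and `(𝒞, 𝒲 ∩ ℱ)`
are complete cotorsion pairs. -/
def IsHoveyTriple [HasExt.{w} C] (𝒞 𝒲 ℱ : Set C) : Prop :=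
  IsThickClass 𝒲 ∧
  IsCompleteCotorsionPair.{w} (𝒞 ∩ 𝒲) ℱ ∧
  IsCompleteCotorsionPair.{w} 𝒞 (𝒲 ∩ ℱ)

/-- A Hovey triple is hereditary if both associated complete cotorsion pairs are hereditary. -/
def IsHereditaryHoveyTriple [HasExt.{w} C] (𝒞 𝒲 ℱ : Set C) : Prop :=
  IsHoveyTriple.{w} 𝒞 𝒲 ℱ ∧
  IsHereditaryPair.{w} (𝒞 ∩ 𝒲) ℱ ∧
  IsHereditaryPair.{w} 𝒞 (𝒲 ∩ ℱ)

/-- A complete cotorsion pair `(𝒞, 𝒲)` is projective if `𝒲` is thick and `𝒞 ∩ 𝒲` is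
the class of projective objects. -/
def IsProjectiveCotorsionPair [HasExt.{w} C] (𝒞 𝒲 : Set C) : Prop :=
  IsCompleteCotorsionPair.{w} 𝒞 𝒲 ∧ IsThickClass 𝒲 ∧
  (𝒞 ∩ 𝒲 = {X : C | Projective X})

/-- A complete cotorsion pair `(𝒲, ℱ)` is injective if `𝒲` is thick and `𝒲 ∩ ℱ` is
the class of injective objects. -/
def IsInjectiveCotorsionPair [HasExt.{w} C] (𝒲 ℱ : Set C) : Prop :=
  IsCompleteCotorsionPair.{w} 𝒲 ℱ ∧ IsThickClass 𝒲 ∧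
  (𝒲 ∩ ℱ = {X : C | Injective X})

section Quivers

variable (Q : Type v) [Quiver.{v} Q]

/-- A quiver is left rooted if it contains no infinite sequence of composable arrows
of the form `⋯ → • → • → •`. -/
def LeftRooted : Prop :=
  ¬ ∃ a : ℕ → Q, ∀ n : ℕ, Nonempty (a (n + 1) ⟶ a n)

/-- A quiver is right rooted if it contains no infinite sequence of composable arrows
of the form `• → • → • → ⋯`. -/
def RightRooted : Prop :=
  ¬ ∃ a : ℕ → Q, ∀ n : ℕ, Nonempty (a n ⟶ a (n + 1))

variable {Q}

/-- The canonical map `φᵢˣ : ⊕_{α : j → i} X(j) ⟶ X(i)` for a representation `X` of the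
quiver `Q` (i.e. a functor from the path category of `Q`) and a vertex `i`. -/
noncomputable def phiMap [HasCoproducts.{v} C] (X : Paths Q ⥤ C) (i : Q) :
    (∐ fun p : Σ j : Q, j ⟶ i => X.obj ((Paths.of Q).obj p.1)) ⟶ X.obj ((Paths.of Q).obj i) :=
  Sigma.desc fun p => X.map p.2.toPath

/-- The canonical map `ψᵢˣ : X(i) ⟶ ∏_{α : i → j} X(j)` for a representation `X` of the
quiver `Q` and a vertex `i`. -/
noncomputable def psiMap [HasProducts.{v} C] (X : Paths Q ⥤ C) (i : Q) :
    X.obj ((Paths.of Q).obj i) ⟶ (∏ᶜ fun p : Σ j : Q, i ⟶ j => X.obj ((Paths.of Q).obj p.1)) :=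
  Pi.lift fun p => X.map p.2.toPath

/-- The class `rep_Q 𝒳` of representations all of whose values lie in the class `𝒳`. -/
def repClass (𝒳 : Set C) : Set (Paths Q ⥤ C) :=
  {X | ∀ i : Q, X.obj ((Paths.of Q).obj i) ∈ 𝒳}

/-- The class `Φ(𝒜)`: representations `X` such that for every vertex `i`, `φᵢˣ` is a
monomorphism, `X(i) ∈ 𝒜` and `coker φᵢˣ ∈ 𝒜`. -/
def PhiClass [HasCoproducts.{v} C] (𝒜 : Set C) : Set (Paths Q ⥤ C) :=
  {X | ∀ i : Q, Mono (phiMap X i) ∧ X.obj ((Paths.of Q).obj i) ∈ 𝒜 ∧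
    cokernel (phiMap X i) ∈ 𝒜}

/-- The class `Ψ(ℬ)`: representations `X` such that for every vertex `i`, `ψᵢˣ` is an
epimorphism, `X(i) ∈ ℬ` and `ker ψᵢˣ ∈ ℬ`. -/
def PsiClass [HasProducts.{v} C] (ℬ : Set C) : Set (Paths Q ⥤ C) :=
  {X | ∀ i : Q, Epi (psiMap X i) ∧ X.obj ((Paths.of Q).obj i) ∈ ℬ ∧
    kernel (psiMap X i) ∈ ℬ}

end Quivers

section TotallyAcyclic

variable (𝒯 : Set C)

/-- `D` is a syzygy (cycle object) of an exact complex of projective objects which remains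
exact after applying `Hom(−, F)` for every `F ∈ 𝒯`. -/
def IsRightTotallyAcyclicSyzygy (D : C) : Prop :=
  ∃ P : CochainComplex C ℤ,
    (∀ n : ℤ, Projective (P.X n)) ∧
    (∀ n : ℤ, P.ExactAt n) ∧
    (∀ F ∈ 𝒯, ∀ n : ℤ, ∀ g : P.X n ⟶ F, P.d (n - 1) n ≫ g = 0 →
      ∃ h : P.X (n + 1) ⟶ F, g = P.d n (n + 1) ≫ h) ∧
    (∃ n : ℤ, Nonempty (D ≅ P.cycles n))

/-- `D` is a syzygy (cycle object) of an exact complex of injective objects which remains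
exact after applying `Hom(F, −)` for every `F ∈ 𝒯`. -/
def IsLeftTotallyAcyclicSyzygy (D : C) : Prop :=
  ∃ I : CochainComplex C ℤ,
    (∀ n : ℤ, Injective (I.X n)) ∧
    (∀ n : ℤ, I.ExactAt n) ∧
    (∀ F ∈ 𝒯, ∀ n : ℤ, ∀ g : F ⟶ I.X n, g ≫ I.d n (n + 1) = 0 →
      ∃ h : F ⟶ I.X (n - 1), g = h ≫ I.d (n - 1) n) ∧
    (∃ n : ℤ, Nonempty (D ≅ I.cycles n))

/-- Gorenstein projective objects: syzygies of exact complexes of projectives that stay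
exact under `Hom(−, P)` for every projective `P`. -/
def IsGorensteinProjective (D : C) : Prop :=
  IsRightTotallyAcyclicSyzygy {P : C | Projective P} D

/-- Gorenstein injective objects: syzygies of exact complexes of injectives that stay
exact under `Hom(I, −)` for every injective `I`. -/
def IsGorensteinInjective (D : C) : Prop :=
  IsLeftTotallyAcyclicSyzygy {I : C | Injective I} D

end TotallyAcyclic

-- `HasExt` instances for module categories and their categories of quiver representations.
noncomputable instance (S : Type u) [Ring S] : HasExt.{u + 1} (ModuleCat.{u} S) := by
  have : HasDerivedCategory.{u + 1} (ModuleCat.{u} S) := HasDerivedCategory.standard _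
  exact hasExt_of_hasDerivedCategory _

noncomputable instance (Q : Type u) [Quiver.{u} Q] (S : Type u) [Ring S] :
    HasExt.{u + 1} (Paths Q ⥤ ModuleCat.{u} S) := by
  have : HasDerivedCategory.{u + 1} (Paths Q ⥤ ModuleCat.{u} S) :=
    HasDerivedCategory.standard _
  exact hasExt_of_hasDerivedCategory _

section Modules

variable {S : Type u} [Ring S]

/-- A finitely presented module. -/
def IsFinitelyPresented (F : ModuleCat.{u} S) : Prop :=
  Module.FinitePresentation S F

/-- An epimorphism of modules is pure if finitely presented modules lift along it
(the standard characterization of purity: equivalently, the inclusion of its kernel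
remains a monomorphism after tensoring with any module on the other side). -/
def IsPureEpi {A B : ModuleCat.{u} S} (g : A ⟶ B) : Prop :=
  Epi g ∧ ∀ F : ModuleCat.{u} S, IsFinitelyPresented F → ∀ h : F ⟶ B, ∃ l : F ⟶ A, l ≫ g = h

/-- A monomorphism of modules is pure if it remains a monomorphism after tensoring with
any module on the other side; equivalently, the projection onto its cokernel is a pure
epimorphism. -/
def IsPureMono {A B : ModuleCat.{u} S} (f : A ⟶ B) : Prop :=
  Mono f ∧ IsPureEpi (cokernel.π f)

/-- A module is flat iff every epimorphism onto it is pure. -/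
def IsFlatModule (M : ModuleCat.{u} S) : Prop :=
  ∀ (N : ModuleCat.{u} S) (g : N ⟶ M), Epi g → IsPureEpi g

/-- A module `M` is fp-injective if `Ext¹(F, M) = 0` for every finitely presented `F`. -/
def IsFpInjectiveModule (M : ModuleCat.{u} S) : Prop :=
  ∀ F : ModuleCat.{u} S, IsFinitelyPresented F → ext1Vanishes.{u + 1} F M

/-- Flat dimension at most `n`, via flat resolutions. -/
def FlatDimLE : ℕ → ModuleCat.{u} S → Prop
  | 0, M => IsFlatModule M
  | n + 1, M => ∃ (F : ModuleCat.{u} S) (g : F ⟶ M),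
      Epi g ∧ IsFlatModule F ∧ FlatDimLE n (kernel g)

/-- Fp-injective dimension at most `n`, via fp-injective coresolutions. -/
def FpInjDimLE : ℕ → ModuleCat.{u} S → Prop
  | 0, M => IsFpInjectiveModule M
  | n + 1, M => ∃ (E : ModuleCat.{u} S) (f : M ⟶ E),
      Mono f ∧ IsFpInjectiveModule E ∧ FpInjDimLE n (cokernel f)

/-- Projective dimension at most `n`. -/
def ProjDimLE : ℕ → ModuleCat.{u} S → Prop
  | 0, M => Projective M
  | n + 1, M => ∃ (P : ModuleCat.{u} S) (g : P ⟶ M),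
      Epi g ∧ Projective P ∧ ProjDimLE n (kernel g)

/-- Injective dimension at most `n`. -/
def InjDimLE : ℕ → ModuleCat.{u} S → Prop
  | 0, M => Injective M
  | n + 1, M => ∃ (E : ModuleCat.{u} S) (f : M ⟶ E),
      Mono f ∧ Injective E ∧ InjDimLE n (cokernel f)

/-- A ring `T` is (left) coherent if every finitely generated (left) ideal of `T` is
finitely presented as a `T`-module.  Right coherence of `R` is coherence of `Rᵐᵒᵖ`. -/
def IsCoherentRing (T : Type u) [Ring T] : Prop :=
  ∀ I : Submodule T T, I.FG → Module.FinitePresentation T I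

/-- A ring `R` is Ding-Chen if it is left and right coherent and `R` has finite
fp-injective dimension both as a left `R`-module and as a right `R`-module. -/
def IsDingChenRing (R : Type u) [Ring R] : Prop :=
  IsCoherentRing R ∧ IsCoherentRing Rᵐᵒᵖ ∧
  (∃ n : ℕ, FpInjDimLE n (ModuleCat.of R R)) ∧
  (∃ n : ℕ, FpInjDimLE n (ModuleCat.of Rᵐᵒᵖ Rᵐᵒᵖ))

/-- A ring `R` is Iwanaga-Gorenstein if it is left and right Noetherian and `R` has finite
injective dimension both as a left `R`-module and as a right `R`-module. -/
def IsIwanagaGorensteinRing (R : Type u) [Ring R] : Prop :=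
  IsNoetherianRing R ∧ IsNoetherianRing Rᵐᵒᵖ ∧
  (∃ n : ℕ, InjDimLE n (ModuleCat.of R R)) ∧
  (∃ n : ℕ, InjDimLE n (ModuleCat.of Rᵐᵒᵖ Rᵐᵒᵖ))

end Modules

section Reps

variable {S : Type u} [Ring S] {P : Type u} [Quiver.{u} P]

/-- A representation of a left rooted quiver is a flat object of the representation
category iff at every vertex `v` the canonical map `φᵥ` is a pure monomorphism and the
value at `v` is a flat module (Enochs–Oyonarte–Torrecillas). -/
def IsFlatRep (X : Paths P ⥤ ModuleCat.{u} S) : Prop :=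
  ∀ v : P, IsPureMono (phiMap X v) ∧ IsFlatModule (X.obj ((Paths.of P).obj v))

/-- A representation of a right rooted quiver over a right coherent ring is an fp-injective
object of the representation category iff at every vertex `v` the canonical map `ψᵥ` is a
pure epimorphism and the value at `v` is an fp-injective module
(Eshraghi–Hafezi–Hosseini–Salarian). -/
def IsFpInjectiveRep (X : Paths P ⥤ ModuleCat.{u} S) : Prop :=
  ∀ v : P, IsPureEpi (psiMap X v) ∧ IsFpInjectiveModule (X.obj ((Paths.of P).obj v))

/-- A Ding projective module: a syzygy of an exact complex of projective modules which
remains exact under `Hom(−, F)` for every flat module `F`. -/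
def IsDingProjectiveModule (D : ModuleCat.{u} S) : Prop :=
  IsRightTotallyAcyclicSyzygy {F : ModuleCat.{u} S | IsFlatModule F} D

/-- A Ding injective module: a syzygy of an exact complex of injective modules which
remains exact under `Hom(F, −)` for every fp-injective module `F`. -/
def IsDingInjectiveModule (D : ModuleCat.{u} S) : Prop :=
  IsLeftTotallyAcyclicSyzygy {F : ModuleCat.{u} S | IsFpInjectiveModule F} D

/-- A Ding projective representation: a syzygy of an exact complex of projective objects
of `rep_Q(R)` which remains exact under `Hom(−, F)` for every flat representation `F`. -/
def IsDingProjectiveRep (D : Paths P ⥤ ModuleCat.{u} S) : Prop :=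
  IsRightTotallyAcyclicSyzygy {F : Paths P ⥤ ModuleCat.{u} S | IsFlatRep F} D

/-- A Ding injective representation: a syzygy of an exact complex of injective objects
of `rep_Q(R)` which remains exact under `Hom(F, −)` for every fp-injective
representation `F`. -/
def IsDingInjectiveRep (D : Paths P ⥤ ModuleCat.{u} S) : Prop :=
  IsLeftTotallyAcyclicSyzygy {F : Paths P ⥤ ModuleCat.{u} S | IsFpInjectiveRep F} D

end Reps


section Statement6Aux

open scoped DirectSum

attribute [local instance] Classical.propDecidable

variable {S : Type u} [Ring S]

lemma isPureEpi_of_section {A B : ModuleCat.{u} S} (g : A ⟶ B) (s : B ⟶ A)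
    (hs : s ≫ g = 𝟙 B) : IsPureEpi g := by
  haveI : IsSplitEpi g := IsSplitEpi.mk' ⟨s, hs⟩
  exact ⟨inferInstance, fun F _ h =>
    ⟨h ≫ s, by rw [Category.assoc, hs, Category.comp_id]⟩⟩

lemma isPureMono_of_retraction {A B : ModuleCat.{u} S} (i : A ⟶ B) (r : B ⟶ A)
    (hr : i ≫ r = 𝟙 A) : IsPureMono i := by
  haveI : IsSplitMono i := IsSplitMono.mk' ⟨r, hr⟩
  refine ⟨inferInstance, ?_⟩
  have hz : i ≫ (𝟙 B - r ≫ i) = 0 := by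
    simp [Preadditive.comp_sub, ← Category.assoc, hr]
  refine isPureEpi_of_section _ (cokernel.desc i (𝟙 B - r ≫ i) hz) ?_
  rw [← cancel_epi (cokernel.π i)]
  simp [Preadditive.sub_comp, cokernel.condition]

/-- Factorization through finite free modules of maps from finitely presented modules. -/
def FactorsThroughFree (M : ModuleCat.{u} S) : Prop :=
  ∀ F : ModuleCat.{u} S, IsFinitelyPresented F → ∀ h : F ⟶ M,
    ∃ (P : ModuleCat.{u} S) (_ : Module.Free S P) (_ : Module.Finite S P)
      (u : F ⟶ P) (a : P ⟶ M), u ≫ a = h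

lemma isFlatModule_of_factors {M : ModuleCat.{u} S} (hM : FactorsThroughFree M) :
    IsFlatModule M := by
  intro N g hg
  refine ⟨hg, fun F hF h => ?_⟩
  obtain ⟨P, hfree, hfin, u, a, hua⟩ := hM F hF h
  haveI := hfree
  obtain ⟨b, hb⟩ := Module.projective_lifting_property (h := Module.Projective.of_free) g.hom a.hom
      ((ModuleCat.epi_iff_surjective g).mp hg)
  refine ⟨u ≫ ModuleCat.ofHom b, ?_⟩
  rw [Category.assoc, show ModuleCat.ofHom b ≫ g = a from ModuleCat.hom_ext hb, hua]

lemma factors_of_isFlatModule {M : ModuleCat.{u} S} (hM : IsFlatModule M) :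
    FactorsThroughFree M := by
  intro F hF h
  haveI : Module.FinitePresentation S F := hF
  obtain ⟨n, gen, hgen⟩ := Module.Finite.exists_fin (R := S) (M := F)
  set N₀ : ModuleCat.{u} S := ModuleCat.of S (M →₀ S) with hN₀
  set p₀ : N₀ ⟶ M := ModuleCat.ofHom (Finsupp.linearCombination S (id : M → M) : (M →₀ S) →ₗ[S] M) with hp₀
  have hsurj : Function.Surjective p₀ :=
    Finsupp.linearCombination_surjective S Function.surjective_id
  obtain ⟨l, hl⟩ := (hM N₀ p₀ ((ModuleCat.epi_iff_surjective _).mpr hsurj)).2 F hF h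
  set T : Finset M := Finset.univ.biUnion fun i : Fin n => (l (gen i)).support with hTdef
  have hrange : ∀ x : F, l x ∈ Finsupp.supported S S (↑T : Set M) := by
    have hle : Submodule.span S (Set.range gen) ≤
        (Finsupp.supported S S (↑T : Set M)).comap l.hom := by
      rw [Submodule.span_le]
      rintro _ ⟨i, rfl⟩
      refine (Finsupp.mem_supported S _).2 fun m hm => ?_
      exact Finset.mem_coe.2 (Finset.mem_biUnion.2 ⟨i, Finset.mem_univ _, hm⟩)
    intro x
    exact hle (hgen ▸ Submodule.mem_top (x := x))
  set P : ModuleCat.{u} S := ModuleCat.of S (Finsupp.supported S S (↑T : Set M)) with hP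
  haveI hfree : Module.Free S P :=
    Module.Free.of_equiv (Finsupp.supportedEquivFinsupp (M := S) (R := S) (↑T : Set M)).symm
  haveI : Module.Finite S ((↑T : Set M) →₀ S) :=
    Module.Finite.equiv (Finsupp.linearEquivFunOnFinite S S (↑T : Set M)).symm
  haveI hfin : Module.Finite S P :=
    Module.Finite.equiv (Finsupp.supportedEquivFinsupp (M := S) (R := S) (↑T : Set M)).symm
  refine ⟨P, hfree, hfin, ModuleCat.ofHom (LinearMap.codRestrict _ l.hom hrange),
    ModuleCat.ofHom (p₀.hom.comp (Finsupp.supported S S (↑T : Set M)).subtype), ?_⟩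
  ext x
  exact ConcreteCategory.congr_hom hl x

set_option maxHeartbeats 1000000 in
lemma isFlatModule_directSum {ι : Type u} (Ms : ι → ModuleCat.{u} S)
    (hMs : ∀ i, IsFlatModule (Ms i)) :
    IsFlatModule (ModuleCat.of S (⨁ i, Ms i)) := by
  apply isFlatModule_of_factors
  intro F hF h
  haveI : Module.FinitePresentation S F := hF
  obtain ⟨n, gen, hgen⟩ := Module.Finite.exists_fin (R := S) (M := F)
  set T : Finset ι := Finset.univ.biUnion fun i : Fin n => DFinsupp.support (h (gen i)) with hTdef
  have hdecomp : (∑ j ∈ T, (DirectSum.lof S ι (fun i => Ms i) j).comp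
      ((DirectSum.component S ι (fun i => Ms i) j).comp h.hom))
      = h.hom := by
    have key2 : ∀ x : ⨁ i, Ms i, DFinsupp.support x ⊆ T →
        ∑ j ∈ T, (DirectSum.lof S ι (fun i => Ms i) j)
          ((DirectSum.component S ι (fun i => Ms i) j) x) = x := by
      intro x hs
      have key : ∀ j : ι, (DirectSum.lof S ι (fun i => Ms i) j)
          ((DirectSum.component S ι (fun i => Ms i) j) x)
          = (DirectSum.of (fun i => (Ms i : Type u)) j) (x j) := fun j => by
        rw [DirectSum.lof_eq_of]; rfl
      calc ∑ j ∈ T, (DirectSum.lof S ι (fun i => Ms i) j)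
            ((DirectSum.component S ι (fun i => Ms i) j) x)
          = ∑ j ∈ T, (DirectSum.of (fun i => (Ms i : Type u)) j) (x j) :=
            Finset.sum_congr rfl fun j _ => key j
        _ = ∑ j ∈ DFinsupp.support x, (DirectSum.of (fun i => (Ms i : Type u)) j) (x j) := by
            refine (Finset.sum_subset hs fun j _ hj => ?_).symm
            rw [DFinsupp.notMem_support_iff.1 hj, map_zero]
        _ = x := DirectSum.sum_support_of _
    apply LinearMap.ext_on hgen
    rintro _ ⟨i, rfl⟩
    rw [LinearMap.sum_apply]
    simp only [LinearMap.comp_apply]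
    refine key2 (h (gen i)) ?_
    rw [hTdef]
    exact Finset.subset_biUnion_of_mem (fun i : Fin n => DFinsupp.support (h (gen i))) (Finset.mem_univ i)
  choose P hfree hfin uu aa haa using fun j : T =>
    factors_of_isFlatModule (hMs j) F hF
      (ModuleCat.ofHom ((DirectSum.component S ι (fun i => Ms i) j).comp h.hom :
        F →ₗ[S] Ms j) : F ⟶ Ms j)
  haveI : ∀ j : T, Module.Free S (P j) := hfree
  haveI : ∀ j : T, Module.Finite S (P j) := hfin
  refine ⟨ModuleCat.of S (∀ j : T, P j),
    inferInstanceAs (Module.Free S (∀ j : T, P j)),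
    inferInstanceAs (Module.Finite S (∀ j : T, P j)),
    ModuleCat.ofHom (LinearMap.pi (fun j => (uu j).hom) : F →ₗ[S] ∀ j : T, P j),
    ModuleCat.ofHom (∑ j : T, (DirectSum.lof S ι (fun i => Ms i) j.1).comp
      ((aa j).hom.comp (LinearMap.proj j)) : (∀ j : T, P j) →ₗ[S] ⨁ i, Ms i), ?_⟩
  ext1
  ext1 x
  show (∑ j : T, (DirectSum.lof S ι (fun i => Ms i) j.1).comp
      ((aa j).hom.comp (LinearMap.proj j)))
      (LinearMap.pi (fun j => (uu j).hom) x) = h x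
  rw [LinearMap.sum_apply]
  have step : ∀ j : T, ((DirectSum.lof S ι (fun i => Ms i) j.1).comp
      ((aa j).hom.comp (LinearMap.proj j)))
      (LinearMap.pi (fun j => (uu j).hom) x)
      = (DirectSum.lof S ι (fun i => Ms i) j.1)
          ((DirectSum.component S ι (fun i => Ms i) j.1) (h x)) := by
    intro j
    have hj := ConcreteCategory.congr_hom (haa j) x
    simp only [LinearMap.comp_apply, LinearMap.proj_apply, LinearMap.pi_apply]
    exact congrArg _ hj
  rw [Finset.sum_congr rfl fun j _ => step j]
  have hcoe : ∑ j : T, (DirectSum.lof S ι (fun i => Ms i) j.1)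
        ((DirectSum.component S ι (fun i => Ms i) j.1) (h x))
      = ∑ j ∈ T, (DirectSum.lof S ι (fun i => Ms i) j)
        ((DirectSum.component S ι (fun i => Ms i) j) (h x)) :=
    Finset.sum_coe_sort T (fun j => (DirectSum.lof S ι (fun i => Ms i) j)
      ((DirectSum.component S ι (fun i => Ms i) j) (h x)))
  rw [hcoe]
  have hfin2 := LinearMap.congr_fun hdecomp x
  rw [LinearMap.sum_apply] at hfin2
  simpa only [LinearMap.comp_apply] using hfin2

lemma isFlatModule_ker {B C : ModuleCat.{u} S} (q : B ⟶ C) (hq : Function.Surjective q)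
    (hB : IsFlatModule B) (hC : IsFlatModule C) :
    IsFlatModule (ModuleCat.of S (LinearMap.ker q.hom)) := by
  apply isFlatModule_of_factors
  intro F hF h
  haveI : Module.FinitePresentation S F := hF
  obtain ⟨P, hfree, hfin, u, a, hua⟩ := factors_of_isFlatModule hB F hF
    (h ≫ ModuleCat.ofHom (LinearMap.ker q.hom).subtype)
  haveI := hfree; haveI := hfin
  have hle : LinearMap.range u.hom ≤
      LinearMap.ker (q.hom.comp a.hom) := by
    rintro _ ⟨y, rfl⟩
    have hy : a (u y) = (h y).1 := ConcreteCategory.congr_hom hua y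
    simp only [LinearMap.mem_ker, LinearMap.comp_apply, hy]
    exact (h y).2
  haveI : Module.Projective S P := Module.Projective.of_free
  haveI : Module.FinitePresentation S P := Module.finitePresentation_of_projective S P
  have hKfg : (LinearMap.range u.hom).FG := by
    rw [LinearMap.range_eq_map]
    exact Submodule.FG.map _ (Module.finite_def.mp inferInstance)
  haveI hQfp : Module.FinitePresentation S (P ⧸ LinearMap.range u.hom) :=
    Module.finitePresentation_of_surjective (LinearMap.range u.hom).mkQ
      (Submodule.mkQ_surjective _) (by rwa [Submodule.ker_mkQ])
  obtain ⟨d, hd⟩ := (hC B q ((ModuleCat.epi_iff_surjective _).mpr hq)).2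
    (ModuleCat.of S (P ⧸ LinearMap.range u.hom)) hQfp
    (ModuleCat.ofHom ((LinearMap.range u.hom).liftQ (q.hom.comp a.hom) hle))
  have hmem : ∀ x : P, a.hom x -
      d.hom
        ((LinearMap.range u.hom).mkQ x) ∈ LinearMap.ker q.hom := by
    intro x
    have h1 : q.hom (d ((LinearMap.range u.hom).mkQ x))
        = ((LinearMap.range u.hom).liftQ
            (q.hom.comp a.hom) hle)
          ((LinearMap.range u.hom).mkQ x) := ConcreteCategory.congr_hom hd _
    rw [LinearMap.mem_ker, map_sub, h1, Submodule.mkQ_apply, Submodule.liftQ_apply, LinearMap.comp_apply, sub_self]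
  refine ⟨P, hfree, hfin, u,
    ModuleCat.ofHom <| LinearMap.codRestrict _ (a.hom - d.hom.comp (LinearMap.range u.hom).mkQ)
      (fun x => hmem x), ?_⟩
  ext1
  ext1 y
  apply Subtype.ext
  show a.hom (u y) - d.hom
      ((LinearMap.range u.hom).mkQ (u y)) = (h y).1
  have h3 : (LinearMap.range u.hom).mkQ (u y) = 0 :=
    (Submodule.Quotient.mk_eq_zero _).2 ⟨y, rfl⟩
  rw [h3, map_zero, sub_zero]
  exact ConcreteCategory.congr_hom hua y


section Quivers

variable {Q : Type u} [Quiver.{u} Q]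

variable (X : Paths Q ⥤ ModuleCat.{u} S)

/-- Index type: pairs of a vertex and a path from it to `w`. -/
abbrev PIdx (w : Q) : Type u := Σ v : Q, Quiver.Path v w

abbrev Fam (w : Q) : PIdx w → Type u := fun τ => X.obj ((Paths.of Q).obj τ.1)

abbrev F0car (w : Q) : Type u := ⨁ τ : PIdx w, Fam X w τ

noncomputable def F0obj (w : Q) : ModuleCat.{u} S := ModuleCat.of S (F0car X w)

noncomputable def F0map {w w' : Q} (q : Quiver.Path w w') : F0obj X w ⟶ F0obj X w' :=
  ModuleCat.ofHom (DirectSum.toModule S (PIdx w) (F0car X w') fun σ =>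
    DirectSum.lof S (PIdx w') (Fam X w') ⟨σ.1, σ.2.comp q⟩ :
    F0car X w →ₗ[S] F0car X w')

lemma F0map_lof {w w' : Q} (q : Quiver.Path w w') (σ : PIdx w) (x : Fam X w σ) :
    F0map X q (DirectSum.lof S (PIdx w) (Fam X w) σ x)
      = DirectSum.lof S (PIdx w') (Fam X w') ⟨σ.1, σ.2.comp q⟩ x := by
  unfold F0map
  exact DirectSum.toModule_lof (N := F0car X w') S σ x

lemma F0map_id (w : Q) : F0map X (Quiver.Path.nil : Quiver.Path w w) = 𝟙 (F0obj X w) := by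
  ext1
  apply DirectSum.linearMap_ext
  intro σ
  ext x
  show F0map X Quiver.Path.nil (DirectSum.lof S (PIdx w) (Fam X w) σ x)
    = DirectSum.lof S (PIdx w) (Fam X w) σ x
  rw [F0map_lof]
  simp
  rfl

lemma F0map_pcomp {w w' w'' : Q} (q : Quiver.Path w w') (q' : Quiver.Path w' w'') :
    F0map X (q.comp q') = F0map X q ≫ F0map X q' := by
  ext1
  apply DirectSum.linearMap_ext
  intro σ
  ext x
  show F0map X (q.comp q') (DirectSum.lof S (PIdx w) (Fam X w) σ x)
    = F0map X q' (F0map X q (DirectSum.lof S (PIdx w) (Fam X w) σ x))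
  rw [F0map_lof, F0map_lof, F0map_lof, Quiver.Path.comp_assoc]

noncomputable def F0 : Paths Q ⥤ ModuleCat.{u} S where
  obj w := F0obj X w
  map {w w'} q := F0map X q
  map_id w := F0map_id X w
  map_comp {w w' w''} q q' := F0map_pcomp X q q'

noncomputable def XmapL {a b : Q} (p : Quiver.Path a b) :
    (X.obj ((Paths.of Q).obj a) : Type u) →ₗ[S] X.obj ((Paths.of Q).obj b) :=
  (X.map (p : (Paths.of Q).obj a ⟶ (Paths.of Q).obj b) :
    X.obj ((Paths.of Q).obj a) ⟶ X.obj ((Paths.of Q).obj b)).hom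

lemma XmapL_id {a : Q} (x : (X.obj ((Paths.of Q).obj a) : Type u)) :
    XmapL X (Quiver.Path.nil : Quiver.Path a a) x = x :=
  (ConcreteCategory.congr_hom (X.map_id ((Paths.of Q).obj a)) x : _)

noncomputable def epsL (w : Q) : F0car X w →ₗ[S] X.obj ((Paths.of Q).obj w) :=
  DirectSum.toModule S (PIdx w) _ fun σ => XmapL X σ.2

lemma epsL_lof (w : Q) (σ : PIdx w) (x : Fam X w σ) :
    epsL X w (DirectSum.lof S (PIdx w) (Fam X w) σ x)
      = XmapL X σ.2 x := by
  unfold epsL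
  exact DirectSum.toModule_lof S σ x

noncomputable def epsApp (w : Q) : F0obj X w ⟶ X.obj ((Paths.of Q).obj w) := ModuleCat.ofHom (epsL X w)

lemma epsApp_natural {w w' : Q} (q : Quiver.Path w w') :
    F0map X q ≫ epsApp X w' =
      epsApp X w ≫ X.map (q : (Paths.of Q).obj w ⟶ (Paths.of Q).obj w') := by
  ext1
  apply DirectSum.linearMap_ext
  intro σ
  ext x
  show epsL X w' (F0map X q (DirectSum.lof S (PIdx w) (Fam X w) σ x))
    = XmapL X q (epsL X w (DirectSum.lof S (PIdx w) (Fam X w) σ x))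
  rw [F0map_lof, epsL_lof, epsL_lof]
  exact (ConcreteCategory.congr_hom (X.map_comp (σ.2 : (Paths.of Q).obj σ.1 ⟶ (Paths.of Q).obj w)
    (q : (Paths.of Q).obj w ⟶ (Paths.of Q).obj w')) x : _)

noncomputable def eps : F0 X ⟶ X where
  app w := epsApp X w
  naturality {w w'} q := epsApp_natural X q

lemma eps_surjective (w : Q) : Function.Surjective (epsL X w) := by
  intro x
  refine ⟨DirectSum.lof S (PIdx w) (Fam X w) ⟨w, Quiver.Path.nil⟩ x, ?_⟩
  rw [epsL_lof]
  exact XmapL_id X x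

abbrev F1car (w : Q) : Type u := LinearMap.ker (epsL X w)

noncomputable def F1obj (w : Q) : ModuleCat.{u} S := ModuleCat.of S (F1car X w)

lemma F0map_mem_ker {w w' : Q} (q : Quiver.Path w w')
    {x : F0car X w} (hx : x ∈ LinearMap.ker (epsL X w)) :
    F0map X q x ∈ LinearMap.ker (epsL X w') := by
  have h1 : epsL X w' (F0map X q x)
      = XmapL X q (epsL X w x) :=
    (ConcreteCategory.congr_hom (epsApp_natural X q) x : _)
  have h2 : epsL X w x = 0 := LinearMap.mem_ker.1 hx
  show epsL X w' (F0map X q x) = 0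
  exact h1.trans (by rw [h2, map_zero])

noncomputable def F1map {w w' : Q} (q : Quiver.Path w w') : F1obj X w ⟶ F1obj X w' :=
  ModuleCat.ofHom <| LinearMap.restrict (F0map X q).hom
    (fun _ hx => F0map_mem_ker X q hx)

lemma F1map_val {w w' : Q} (q : Quiver.Path w w') (x : F1car X w) :
    (F1map X q x : F1car X w').val = F0map X q x.val := rfl

noncomputable def F1 : Paths Q ⥤ ModuleCat.{u} S where
  obj w := F1obj X w
  map {w w'} q := F1map X q
  map_id w := by
    ext x
    apply Subtype.ext
    show F0map X (Quiver.Path.nil) (x : F1car X w).val = (x : F1car X w).val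
    erw [F0map_id]
    rfl
  map_comp {w w' w''} q q' := by
    ext x
    apply Subtype.ext
    show F0map X (q.comp q') (x : F1car X w).val
      = F0map X q' ((F1map X q (x : F1car X w)).val)
    erw [F0map_pcomp]
    rfl

noncomputable def incl : F1 X ⟶ F0 X where
  app w := ModuleCat.ofHom ((LinearMap.ker (epsL X w)).subtype)
  naturality {w w'} q := by
    ext x
    exact (F1map_val X q x).symm

end Quivers


section Retractions

variable {Q : Type u} [Quiver.{u} Q] (X : Paths Q ⥤ ModuleCat.{u} S)

/-- view a morphism of module categories as a linear map -/
abbrev toLin {A B : ModuleCat.{u} S} (f : A ⟶ B) : A →ₗ[S] B := f.hom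

noncomputable def ret0 (w : Q) : ∀ σ : PIdx (Q := Q) w, Fam X w σ →ₗ[S]
    ↥(∐ fun p : Σ j : Q, j ⟶ w => (F0 X).obj ((Paths.of Q).obj p.1))
  | ⟨_, Quiver.Path.nil⟩ => 0
  | ⟨v, @Quiver.Path.cons _ _ _ u' _ p α⟩ =>
      (toLin (Sigma.ι (fun p : Σ j : Q, j ⟶ w => (F0 X).obj ((Paths.of Q).obj p.1)) ⟨u', α⟩)).comp
        (DirectSum.lof S (PIdx u') (Fam X u') ⟨v, p⟩)

noncomputable def r0 (w : Q) :
    (F0 X).obj ((Paths.of Q).obj w) ⟶ (∐ fun p : Σ j : Q, j ⟶ w => (F0 X).obj ((Paths.of Q).obj p.1)) :=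
  ModuleCat.ofHom <| DirectSum.toModule S (PIdx w) _ fun σ => ret0 X w σ

lemma r0_retract (w : Q) : phiMap (F0 X) w ≫ r0 X w = 𝟙 _ := by
  apply Sigma.hom_ext
  rintro ⟨u', α⟩
  rw [Category.comp_id, ← Category.assoc]
  have h1 : Sigma.ι (fun p : Σ j : Q, j ⟶ w => (F0 X).obj ((Paths.of Q).obj p.1)) ⟨u', α⟩ ≫
      phiMap (F0 X) w = (F0 X).map (Quiver.Hom.toPath α) := by
    simp [phiMap]
    rfl
  rw [h1]
  change F0map X (Quiver.Hom.toPath α) ≫ r0 X w = _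
  ext1
  apply DirectSum.linearMap_ext
  rintro ⟨v, p⟩
  ext x
  simp only [LinearMap.comp_apply]
  show r0 X w (F0map X (Quiver.Hom.toPath α) (DirectSum.lof S (PIdx u') (Fam X u') ⟨v, p⟩ x))
    = (toLin (Sigma.ι (fun p : Σ j : Q, j ⟶ w => (F0 X).obj ((Paths.of Q).obj p.1)) ⟨u', α⟩))
        (DirectSum.lof S (PIdx u') (Fam X u') ⟨v, p⟩ x)
  rw [F0map_lof]
  show (DirectSum.toModule S (PIdx w) _ fun σ => ret0 X w σ)
      (DirectSum.lof S (PIdx w) (Fam X w) ⟨v, p.comp (Quiver.Hom.toPath α)⟩ x) = _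
  rw [DirectSum.toModule_lof]
  rfl

noncomputable def toKer {v u' : Q} (p : Quiver.Path v u') :
    (X.obj ((Paths.of Q).obj v) : Type u) →ₗ[S] F1car X u' :=
  LinearMap.codRestrict (LinearMap.ker (epsL X u'))
    ((DirectSum.lof S (PIdx u') (Fam X u') ⟨v, p⟩) -
      (DirectSum.lof S (PIdx u') (Fam X u') ⟨u', Quiver.Path.nil⟩).comp (XmapL X p))
    (fun x => by
      have hnil : epsL X u'
          (DirectSum.lof S (PIdx u') (Fam X u') ⟨u', Quiver.Path.nil⟩ (XmapL X p x))
          = XmapL X p x := by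
        rw [epsL_lof]
        exact XmapL_id X (XmapL X p x)
      rw [LinearMap.mem_ker, LinearMap.sub_apply, LinearMap.comp_apply, map_sub, hnil,
        epsL_lof, sub_self])

lemma toKer_val {v u' : Q} (p : Quiver.Path v u') (x : (X.obj ((Paths.of Q).obj v) : Type u)) :
    (toKer X p x).val = DirectSum.lof S (PIdx u') (Fam X u') ⟨v, p⟩ x -
      DirectSum.lof S (PIdx u') (Fam X u') ⟨u', Quiver.Path.nil⟩ (XmapL X p x) := rfl

noncomputable def kerProj (u' : Q) : F0car X u' →ₗ[S] F1car X u' :=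
  LinearMap.codRestrict (LinearMap.ker (epsL X u'))
    (LinearMap.id - (DirectSum.lof S (PIdx u') (Fam X u') ⟨u', Quiver.Path.nil⟩).comp
      (epsL X u'))
    (fun x => by
      have hnil : epsL X u'
          (DirectSum.lof S (PIdx u') (Fam X u') ⟨u', Quiver.Path.nil⟩ (epsL X u' x))
          = epsL X u' x := by
        rw [epsL_lof]
        exact XmapL_id X (epsL X u' x)
      rw [LinearMap.mem_ker, LinearMap.sub_apply, LinearMap.comp_apply, map_sub, hnil,
        LinearMap.id_apply, sub_self])

lemma kerProj_lof {v u' : Q} (p : Quiver.Path v u') (x : (X.obj ((Paths.of Q).obj v) : Type u)) :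
    kerProj X u' (DirectSum.lof S (PIdx u') (Fam X u') ⟨v, p⟩ x) = toKer X p x := by
  apply Subtype.ext
  show DirectSum.lof S (PIdx u') (Fam X u') ⟨v, p⟩ x -
      DirectSum.lof S (PIdx u') (Fam X u') ⟨u', Quiver.Path.nil⟩
        (epsL X u' (DirectSum.lof S (PIdx u') (Fam X u') ⟨v, p⟩ x)) = (toKer X p x).val
  rw [epsL_lof, toKer_val]

lemma kerProj_ker {u' : Q} (a : F1car X u') : kerProj X u' a.val = a := by
  apply Subtype.ext
  show a.val - DirectSum.lof S (PIdx u') (Fam X u') ⟨u', Quiver.Path.nil⟩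
      (epsL X u' a.val) = a.val
  rw [LinearMap.mem_ker.1 a.2, map_zero, sub_zero]

noncomputable def ret1 (w : Q) : ∀ σ : PIdx (Q := Q) w, Fam X w σ →ₗ[S]
    ↥(∐ fun p : Σ j : Q, j ⟶ w => (F1 X).obj ((Paths.of Q).obj p.1))
  | ⟨_, Quiver.Path.nil⟩ => 0
  | ⟨v, @Quiver.Path.cons _ _ _ u' _ p α⟩ =>
      (toLin (Sigma.ι (fun p : Σ j : Q, j ⟶ w => (F1 X).obj ((Paths.of Q).obj p.1)) ⟨u', α⟩)).comp
        (toKer X p)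

noncomputable def r1 (w : Q) :
    (F1 X).obj ((Paths.of Q).obj w) ⟶ (∐ fun p : Σ j : Q, j ⟶ w => (F1 X).obj ((Paths.of Q).obj p.1)) :=
  ModuleCat.ofHom <| (DirectSum.toModule S (PIdx w) _ fun σ => ret1 X w σ).comp
    (LinearMap.ker (epsL X w)).subtype

lemma amb {w u' : Q} (α : u' ⟶ w) :
    (DirectSum.toModule S (PIdx w)
        (↥(∐ fun p : Σ j : Q, j ⟶ w => (F1 X).obj ((Paths.of Q).obj p.1)))
        fun σ => ret1 X w σ).comp (F0map X (Quiver.Hom.toPath α)).hom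
      = (toLin (Sigma.ι (fun p : Σ j : Q, j ⟶ w => (F1 X).obj ((Paths.of Q).obj p.1)) ⟨u', α⟩)).comp
          ((kerProj X u' : F0car X u' →ₗ[S] F1car X u')) := by
  apply DirectSum.linearMap_ext
  rintro ⟨v, p⟩
  ext x
  simp only [LinearMap.comp_apply]
  show (DirectSum.toModule S (PIdx w) _ fun σ => ret1 X w σ)
      (F0map X (Quiver.Hom.toPath α) (DirectSum.lof S (PIdx u') (Fam X u') ⟨v, p⟩ x))
    = (toLin (Sigma.ι (fun p : Σ j : Q, j ⟶ w => (F1 X).obj ((Paths.of Q).obj p.1)) ⟨u', α⟩))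
        (kerProj X u' (DirectSum.lof S (PIdx u') (Fam X u') ⟨v, p⟩ x))
  rw [F0map_lof, DirectSum.toModule_lof]
  rw [show ret1 X w ⟨v, p.comp (Quiver.Hom.toPath α)⟩ x
      = (toLin (Sigma.ι (fun p : Σ j : Q, j ⟶ w => (F1 X).obj ((Paths.of Q).obj p.1)) ⟨u', α⟩))
          (toKer X p x) from rfl]
  rw [kerProj_lof]

lemma r1_retract (w : Q) : phiMap (F1 X) w ≫ r1 X w = 𝟙 _ := by
  apply Sigma.hom_ext
  rintro ⟨u', α⟩
  rw [Category.comp_id, ← Category.assoc]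
  have h1 : Sigma.ι (fun p : Σ j : Q, j ⟶ w => (F1 X).obj ((Paths.of Q).obj p.1)) ⟨u', α⟩ ≫
      phiMap (F1 X) w = (F1 X).map (Quiver.Hom.toPath α) := by
    simp [phiMap]
    rfl
  rw [h1]
  ext a
  show (DirectSum.toModule S (PIdx w) _ fun σ => ret1 X w σ)
      ((F1map X (Quiver.Hom.toPath α) a).val)
    = (toLin (Sigma.ι (fun p : Σ j : Q, j ⟶ w => (F1 X).obj ((Paths.of Q).obj p.1)) ⟨u', α⟩)) a
  erw [F1map_val]
  exact (LinearMap.congr_fun (amb X α) a.val).trans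
    (DFunLike.congr_arg
      (toLin (Sigma.ι (fun p : Σ j : Q, j ⟶ w => (F1 X).obj ((Paths.of Q).obj p.1)) ⟨u', α⟩))
      (kerProj_ker X a))

end Retractions



section Final

variable {Q : Type u} [Quiver.{u} Q] (X : Paths Q ⥤ ModuleCat.{u} S)

lemma isFlatRep_F0 (hflat : ∀ v : Q, IsFlatModule (X.obj ((Paths.of Q).obj v))) :
    IsFlatRep (F0 X) := by
  intro w
  constructor
  · exact isPureMono_of_retraction _ (r0 X w) (r0_retract X w)
  · exact isFlatModule_directSum (fun σ : PIdx (Q := Q) w => X.obj ((Paths.of Q).obj σ.1))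
      (fun σ => hflat σ.1)

lemma isFlatRep_F1 (hflat : ∀ v : Q, IsFlatModule (X.obj ((Paths.of Q).obj v))) :
    IsFlatRep (F1 X) := by
  intro w
  constructor
  · exact isPureMono_of_retraction _ (r1 X w) (r1_retract X w)
  · exact isFlatModule_ker (B := F0obj X w) (C := X.obj ((Paths.of Q).obj w))
      (ModuleCat.ofHom (epsL X w)) (eps_surjective X w)
      (isFlatModule_directSum (fun σ : PIdx (Q := Q) w => X.obj ((Paths.of Q).obj σ.1))
        (fun σ => hflat σ.1))
      (hflat w)

lemma incl_eps_zero : incl X ≫ eps X = 0 := by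
  apply NatTrans.ext
  funext w
  apply ModuleCat.hom_ext
  apply LinearMap.ext
  intro x
  show epsL X w (x : F1car X w).val = ((0 : F1 X ⟶ X).app w) x
  rw [LinearMap.mem_ker.1 (x : F1car X w).2]
  rfl

set_option maxHeartbeats 1600000 in
lemma main_shortExact :
    (ShortComplex.mk (incl X) (eps X) (incl_eps_zero X)).ShortExact := by
  haveI hma : ∀ w : Paths Q, Mono ((incl X).app w) := fun w =>
    (ModuleCat.mono_iff_injective ((incl X).app w)).2 Subtype.val_injective
  haveI hm : Mono (incl X) := NatTrans.mono_of_mono_app _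
  haveI hea : ∀ w : Paths Q, Epi ((eps X).app w) := fun w =>
    (ModuleCat.epi_iff_surjective ((eps X).app w)).2 (eps_surjective X w)
  haveI he : Epi (eps X) := NatTrans.epi_of_epi_app _
  refine ⟨?_⟩
  apply ShortComplex.exact_of_f_is_kernel
  apply evaluationJointlyReflectsLimits
  intro w
  have hcond : (incl X).app w ≫ (eps X).app w = 0 := by
    apply ModuleCat.hom_ext
    apply LinearMap.ext
    intro x
    exact LinearMap.mem_ker.1 x.2
  have hker : IsLimit (KernelFork.ofι ((incl X).app w) hcond) :=
    ModuleCat.kernelIsLimit (M := F0obj X w) (N := X.obj w) (ModuleCat.ofHom (epsL X w))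
  exact (KernelFork.isLimitMapConeEquiv _
      ((evaluation (Paths Q) (ModuleCat.{u} S)).obj w)).symm hker

end Final


end Statement6Aux

set_option maxHeartbeats 1600000

/-- Let `R` be a ring, `Q` a left rooted quiver, and `X` a representation
of `Q` in right `R`-modules with `X(v)` flat for every vertex `v`.  Then the flat dimension
of `X` is at most `1`: there is a short exact sequence `0 → F₁ → F₀ → X → 0` of
representations with `F₀` and `F₁` flat representations. -/
theorem statement6 {R : Type u} [Ring R]
    {Q : Type u} [Quiver.{u} Q] (hQ : LeftRooted Q)
    (X : Paths Q ⥤ ModuleCat.{u} Rᵐᵒᵖ)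
    (hflat : ∀ v : Q, IsFlatModule (X.obj ((Paths.of Q).obj v))) :
    ∃ (F₁ F₀ : Paths Q ⥤ ModuleCat.{u} Rᵐᵒᵖ) (f : F₁ ⟶ F₀) (g : F₀ ⟶ X) (w : f ≫ g = 0),
      (ShortComplex.mk f g w).ShortExact ∧ IsFlatRep F₁ ∧ IsFlatRep F₀ := by
  exact ⟨F1 X, F0 X, incl X, eps X, incl_eps_zero X, main_shortExact X,
    isFlatRep_F1 X hflat, isFlatRep_F0 X hflat⟩

end RepModels
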